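/- arXiv:2305.00308 — 5 statements merged into one kernel-verified Lean document; each statement's English description precedes it below -/
import Mathlib

section
/- Let f : ℕ → ℕ → ℕ be defined by f(0,h) = 0 for all h, f(n,0) = 1 for all n ≥ 1, and f(n,h) = f(n,h-1) + f(⌊n/2⌋,h) + f(n-1-⌊n/2⌋,h) for all n,h ≥ 1. Then for all n ≥ 1 and h ≥ 1, f(n,h) = (∑_{i=0}^{⌊log₂ n⌋ - 1} 2^i · C(h-1+i, h-1)) + (n - 2^{⌊log₂ n⌋} + 1) · C(h-1+⌊log₂ n⌋, h-1), where C(a,b) denotes the binomial coefficient and ⌊log₂ n⌋ is the floor of the base-2 logarithm of n. -/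
/-!
Halving a set of `n` nodes into a root and parts of sizes `⌊n/2⌋` and `n - 1 - ⌊n/2⌋` builds the
complete binary tree on `n` nodes, whose level `i` has `min (2^i) (n + 1 - 2^i)` nodes. By Pascal's
rule, `Σ_i (size of level i) · C(h-1+i, h-1)` obeys the same recurrence in `h` as `f`, and it equals
`n` when `h = 1`, so it is `f(n,h)`. Every level of depth less than `⌊log₂ n⌋` is full, which gives the
closed form.
-/

open Finset

/-- The number of nodes at depth `i` of the complete binary tree with `n` nodes; the truncated
subtraction makes it `0` below the last level. -/
def levelWidth (n i : ℕ) : ℕ := min (2 ^ i) (n + 1 - 2 ^ i)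

/-- `f n (k + 1)`, summed level by level. -/
def weightedWidth (n k : ℕ) : ℕ := ∑ i ∈ range (n + 1), levelWidth n i * (k + i).choose k

lemma lt_two_pow_succ_self (n : ℕ) : n < 2 ^ (n + 1) :=
  Nat.lt_two_pow_self.trans (Nat.pow_lt_pow_right one_lt_two n.lt_succ_self)

lemma levelWidth_eq_zero {n i : ℕ} (h : n < 2 ^ i) : levelWidth n i = 0 := by
  unfold levelWidth; omega

lemma levelWidth_half_add_levelWidth_sub (n i : ℕ) :
    levelWidth (n / 2) i + levelWidth (n - 1 - n / 2) i = levelWidth n (i + 1) := by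
  have := Nat.one_le_two_pow (n := i)
  unfold levelWidth
  rw [pow_succ]
  omega

lemma sum_range_levelWidth (n K : ℕ) : ∑ i ∈ range K, levelWidth n i = min n (2 ^ K - 1) := by
  induction K with
  | zero => simp
  | succ K ih =>
    have := Nat.one_le_two_pow (n := K)
    rw [sum_range_succ, ih, levelWidth, pow_succ]
    omega

lemma sum_range_levelWidth_mul_of_le {n K M : ℕ} (c : ℕ → ℕ) (hK : n < 2 ^ K) (hKM : K ≤ M) :
    ∑ i ∈ range M, levelWidth n i * c i = ∑ i ∈ range K, levelWidth n i * c i := by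
  refine (sum_subset (range_subset_range.2 hKM) fun i _ hi => ?_).symm
  have hKi : K ≤ i := by simpa using hi
  rw [levelWidth_eq_zero (hK.trans_le (Nat.pow_le_pow_right two_pos hKi)), zero_mul]

lemma weightedWidth_zero_left (k : ℕ) : weightedWidth 0 k = 0 := by
  simp [weightedWidth, levelWidth]

lemma weightedWidth_zero_right (n : ℕ) : weightedWidth n 0 = n := by
  have := lt_two_pow_succ_self n
  simp only [weightedWidth, Nat.choose_zero_right, mul_one, sum_range_levelWidth]
  omega

lemma weightedWidth_half_add_weightedWidth_sub {n : ℕ} (hn : n ≠ 0) (k : ℕ) :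
    weightedWidth (n / 2) (k + 1) + weightedWidth (n - 1 - n / 2) (k + 1) =
      ∑ i ∈ range (n + 1), levelWidth n i * (k + i).choose (k + 1) := by
  rw [weightedWidth, weightedWidth,
    ← sum_range_levelWidth_mul_of_le (M := n) _ (lt_two_pow_succ_self _) (by omega),
    ← sum_range_levelWidth_mul_of_le (M := n) _ (lt_two_pow_succ_self _) (by omega),
    ← sum_add_distrib, sum_range_succ']
  simp only [← add_mul, levelWidth_half_add_levelWidth_sub, add_zero,
    Nat.choose_eq_zero_of_lt k.lt_succ_self, mul_zero]
  exact sum_congr rfl fun i _ => by rw [add_right_comm, add_assoc]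

lemma weightedWidth_succ {n : ℕ} (hn : n ≠ 0) (k : ℕ) :
    weightedWidth n (k + 1) =
      weightedWidth n k + weightedWidth (n / 2) (k + 1) + weightedWidth (n - 1 - n / 2) (k + 1) := by
  rw [add_assoc, weightedWidth_half_add_weightedWidth_sub hn, weightedWidth, weightedWidth,
    ← sum_add_distrib]
  refine sum_congr rfl fun i _ => ?_
  rw [← mul_add, add_right_comm, Nat.choose_succ_succ]

lemma weightedWidth_eq_of_log_eq {n L : ℕ} (hn : n ≠ 0) (hL : Nat.log 2 n = L) (k : ℕ) :
    weightedWidth n k =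
      ∑ i ∈ range L, 2 ^ i * (k + i).choose k + (n - 2 ^ L + 1) * (k + L).choose k := by
  have hlow : 2 ^ L ≤ n := hL ▸ Nat.pow_log_le_self 2 hn
  have hhigh : n < 2 ^ (L + 1) := hL ▸ Nat.lt_pow_succ_log_self one_lt_two n
  have hLn : L < n := Nat.lt_two_pow_self.trans_le hlow
  rw [weightedWidth, sum_range_levelWidth_mul_of_le _ hhigh (by omega), sum_range_succ]
  have hlast : levelWidth n L = n - 2 ^ L + 1 := by
    rw [pow_succ] at hhigh
    unfold levelWidth; omega
  have hfull : ∀ i ∈ range L, levelWidth n i = 2 ^ i := fun i hi => by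
    have := Nat.pow_le_pow_right two_pos (mem_range.1 hi)
    rw [pow_succ] at this
    unfold levelWidth; omega
  rw [hlast, sum_congr rfl fun i hi => by rw [hfull i hi]]

theorem eq_weightedWidth_of_rec (f : ℕ → ℕ → ℕ)
    (hf0 : ∀ h, f 0 h = 0)
    (hfn0 : ∀ n, 1 ≤ n → f n 0 = 1)
    (hrec : ∀ n h, 1 ≤ n → 1 ≤ h →
      f n h = f n (h - 1) + f (n / 2) h + f (n - 1 - n / 2) h) (n k : ℕ) :
    f n (k + 1) = weightedWidth n k := by
  induction n using Nat.strong_induction_on generalizing k with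
  | _ n ih =>
    rcases Nat.eq_zero_or_pos n with rfl | hn
    · rw [hf0, weightedWidth_zero_left]
    have hhalf : n / 2 < n := Nat.div_lt_self hn one_lt_two
    have hrest : n - 1 - n / 2 < n := by omega
    induction k with
    | zero =>
      rw [hrec n 1 hn le_rfl, hfn0 n hn, ih _ hhalf, ih _ hrest]
      simp only [weightedWidth_zero_right]
      omega
    | succ k ihk =>
      rw [hrec n _ hn (by omega), Nat.add_sub_cancel, ihk, ih _ hhalf, ih _ hrest,
        ← weightedWidth_succ hn.ne']

theorem stmt_0 (f : ℕ → ℕ → ℕ)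
    (hf0 : ∀ h, f 0 h = 0)
    (hfn0 : ∀ n, 1 ≤ n → f n 0 = 1)
    (hrec : ∀ n h, 1 ≤ n → 1 ≤ h →
      f n h = f n (h - 1) + f (n / 2) h + f (n - 1 - n / 2) h) :
    ∀ n h, 1 ≤ n → 1 ≤ h →
      f n h = (∑ i ∈ Finset.range (Nat.log 2 n), 2 ^ i * Nat.choose (h - 1 + i) (h - 1))
        + (n - 2 ^ Nat.log 2 n + 1) * Nat.choose (h - 1 + Nat.log 2 n) (h - 1) := by
  intro n h hn hh
  obtain ⟨k, rfl⟩ : ∃ k, h = k + 1 := ⟨h - 1, by omega⟩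
  rw [eq_weightedWidth_of_rec f hf0 hfn0 hrec, Nat.add_sub_cancel,
    weightedWidth_eq_of_log_eq (by omega) rfl]
end

section
/- Let f : ℕ → ℕ → ℕ be defined by f(0,h) = 0 for all h, f(n,0) = 1 for all n ≥ 1, and f(n,h) = f(n,h-1) + f(⌊n/2⌋,h) + f(n-1-⌊n/2⌋,h) for all n,h ≥ 1. Then for all n ≥ 1 and h ≥ 1, f(n,h) - f(n-1,h) = C(h-1+⌊log₂ n⌋, h-1); equivalently, f(n,h) = f(n-1,h) + C(h-1+⌊log₂ n⌋, h-1). -/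
theorem stmt_1 (f : ℕ → ℕ → ℕ)
    (hf0 : ∀ h, f 0 h = 0)
    (hfn0 : ∀ n, 1 ≤ n → f n 0 = 1)
    (hrec : ∀ n h, 1 ≤ n → 1 ≤ h →
      f n h = f n (h - 1) + f (n / 2) h + f (n - 1 - n / 2) h) :
    ∀ n h, 1 ≤ n → 1 ≤ h →
      f n h - f (n - 1) h = Nat.choose (h - 1 + Nat.log 2 n) (h - 1) ∧
      f n h = f (n - 1) h + Nat.choose (h - 1 + Nat.log 2 n) (h - 1) := by
  have f1 : ∀ h, f 1 h = 1 := by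
    intro h
    induction h with
    | zero => exact hfn0 1 le_rfl
    | succ k ih =>
      have h1 := hrec 1 (k+1) le_rfl (by omega)
      norm_num [hf0] at h1
      omega
  have key : ∀ n, 1 ≤ n → ∀ h, 1 ≤ h →
      f n h = f (n-1) h + Nat.choose (h - 1 + Nat.log 2 n) (h-1) := by
    intro n
    induction n using Nat.strong_induction_on with
    | _ n ihn =>
      intro hn h
      rcases Nat.lt_or_ge n 2 with h2 | h2
      · have hn1 : n = 1 := by omega
        subst hn1
        intro _
        simp [f1, hf0, Nat.log_one_right]
      · induction h with
        | zero => omega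
        | succ k ih =>
          intro _
          have hL : 0 < Nat.log 2 n := Nat.log_pos (by norm_num) h2
          have lg : Nat.log 2 (n/2) = Nat.log 2 n - 1 := Nat.log_div_base 2 n
          have e1 := hrec n (k+1) (by omega) (by omega)
          have e2 := hrec (n-1) (k+1) (by omega) (by omega)
          have d1 : n - 1 - n/2 = (n-1)/2 := by omega
          have d2 : n - 1 - 1 - (n-1)/2 = n/2 - 1 := by omega
          rw [d1] at e1
          rw [d2] at e2
          have ediv := ihn (n/2) (by omega) (by omega) (k+1) (by omega)
          rw [lg] at ediv
          simp only [Nat.add_sub_cancel] at e1 e2 ediv ⊢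
          rcases Nat.eq_zero_or_pos k with rfl | hk
          · simp only [Nat.choose_zero_right] at ediv ⊢
            have b1 := hfn0 n (by omega)
            have b2 := hfn0 (n-1) (by omega)
            omega
          · obtain ⟨j, rfl⟩ : ∃ j, k = j + 1 := ⟨k-1, by omega⟩
            have eh := ih (by omega)
            obtain ⟨m, hm⟩ : ∃ m, Nat.log 2 n = m + 1 := ⟨Nat.log 2 n - 1, by omega⟩
            rw [hm] at ediv ⊢
            have pas : (j+m+1+1).choose (j+1)
                = (j+m+1).choose j + (j+m+1).choose (j+1) :=
              Nat.choose_succ_succ (j+m+1) j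
            have harg : j + 1 - 1 + Nat.log 2 n = j + m + 1 := by omega
            have harg2 : j + 1 - 1 = j := by omega
            rw [harg, harg2] at eh
            have a1 : j + 1 + (m + 1 - 1) = j + m + 1 := by omega
            have a3 : j + 1 + (m+1) = j + m + 1 + 1 := by omega
            rw [a1] at ediv
            rw [a3]
            omega
  intro n h hn hh
  have := key n hn h hh
  exact ⟨by omega, this⟩
end

section
/- Let f : ℕ → ℕ → ℕ be defined by f(0,h) = 0 for all h, f(n,0) = 1 for all n ≥ 1, and f(n,h) = f(n,h-1) + f(⌊n/2⌋,h) + f(n-1-⌊n/2⌋,h) for all n,h ≥ 1. Then for all n ≥ 1 and h ≥ 1, f(n,h) ≤ n · C(h-1+⌊log₂ n⌋, ⌊log₂ n⌋). -/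
lemma choose_diag_mono (c : ℕ) : ∀ a b : ℕ, a ≤ b →
    Nat.choose (c + a) a ≤ Nat.choose (c + b) b := by
  intro a b hab
  obtain ⟨d, rfl⟩ := Nat.exists_eq_add_of_le hab
  induction d with
  | zero => simp
  | succ d ih =>
    calc Nat.choose (c + a) a ≤ Nat.choose (c + (a + d)) (a + d) := ih (by omega)
      _ ≤ Nat.choose (c + (a + (d+1))) (a + (d+1)) := by
          have : c + (a + (d+1)) = (c + (a + d)) + 1 := by ring
          rw [this, show a + (d+1) = (a+d) + 1 from by ring, Nat.choose_succ_succ']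
          omega

theorem stmt_2 (f : ℕ → ℕ → ℕ)
    (hf0 : ∀ h, f 0 h = 0)
    (hfn0 : ∀ n, 1 ≤ n → f n 0 = 1)
    (hrec : ∀ n h, 1 ≤ n → 1 ≤ h →
      f n h = f n (h - 1) + f (n / 2) h + f (n - 1 - n / 2) h) :
    ∀ n h, 1 ≤ n → 1 ≤ h →
      f n h ≤ n * Nat.choose (h - 1 + Nat.log 2 n) (Nat.log 2 n) := by
  have hf1 : ∀ h, f 1 h = 1 := by
    intro h
    induction h with
    | zero => exact hfn0 1 le_rfl
    | succ k ih =>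
      rw [hrec 1 (k+1) le_rfl (by omega)]
      simp [hf0, ih]
  intro n
  induction n using Nat.strong_induction_on with
  | _ n IH =>
    intro h
    induction h with
    | zero => intro _ h0; omega
    | succ k ihk =>
      intro hn _
      rcases eq_or_lt_of_le hn with h1 | h2
      · -- n = 1
        subst h1
        simp [hf1, Nat.log_one_right]
      · -- n ≥ 2
        have hn2 : 2 ≤ n := h2
        set L := Nat.log 2 n with hLdef
        have hL : 1 ≤ L := Nat.log_pos (by norm_num) hn2
        have hlogdiv : Nat.log 2 (n / 2) = L - 1 := Nat.log_div_base 2 n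
        have hhalf : 1 ≤ n / 2 := by omega
        have hsum : n / 2 + (n - 1 - n / 2) = n - 1 := by omega
        -- bound on f (n/2) (k+1)
        have B2 : f (n / 2) (k+1) ≤ (n / 2) * Nat.choose (k + (L - 1)) (L - 1) := by
          have := IH (n / 2) (by omega) (k+1) hhalf (by omega)
          simpa [hlogdiv] using this
        -- bound on f (n - 1 - n/2) (k+1)
        have B3 : f (n - 1 - n / 2) (k+1) ≤ (n - 1 - n / 2) * Nat.choose (k + (L - 1)) (L - 1) := by
          set m := n - 1 - n / 2 with hm
          rcases Nat.eq_zero_or_pos m with hm0 | hm1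
          · simp [hm0, hf0]
          · have hmlt : m < n := by omega
            have hle : Nat.log 2 m ≤ L - 1 := by
              rw [← hlogdiv]
              exact Nat.log_mono_right (by omega)
            calc f m (k+1) ≤ m * Nat.choose (k + Nat.log 2 m) (Nat.log 2 m) := by
                  simpa using IH m hmlt (k+1) hm1 (by omega)
              _ ≤ m * Nat.choose (k + (L - 1)) (L - 1) :=
                  Nat.mul_le_mul_left m (choose_diag_mono k _ _ hle)
        rw [hrec n (k+1) hn (by omega)]
        simp only [Nat.add_sub_cancel]
        rcases Nat.eq_zero_or_pos k with hk0 | hk1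
        · -- h = 1 case
          subst hk0
          have hfn : f n 0 = 1 := hfn0 n hn
          simp only [Nat.zero_add, Nat.choose_self] at B2 B3 ⊢
          rw [hfn]
          omega
        · -- h = k+1, k ≥ 1
          obtain ⟨j, rfl⟩ : ∃ j, k = j + 1 := ⟨k - 1, by omega⟩
          have B1 : f n (j+1) ≤ n * Nat.choose (j + L) L := by
            simpa using ihk hn (by omega)
          have hpascal : Nat.choose (j + 1 + L) L
              = Nat.choose (j + L) (L - 1) + Nat.choose (j + L) L := by
            have h1 : j + 1 + L = (j + L) + 1 := by ring
            have h2 : L = (L - 1) + 1 := by omega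
            rw [h1, h2, Nat.choose_succ_succ']
            congr 1
          have heq : j + 1 + (L - 1) = j + L := by omega
          rw [heq] at B2 B3
          calc f n (j+1) + f (n/2) (j+1+1) + f (n-1-n/2) (j+1+1)
              ≤ n * Nat.choose (j + L) L + (n / 2) * Nat.choose (j + L) (L - 1)
                + (n - 1 - n / 2) * Nat.choose (j + L) (L - 1) := by
                gcongr
            _ = n * Nat.choose (j + L) L + (n - 1) * Nat.choose (j + L) (L - 1) := by
                rw [Nat.add_assoc, ← Nat.add_mul, hsum]
            _ ≤ n * Nat.choose (j + L) L + n * Nat.choose (j + L) (L - 1) := by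
                gcongr; omega
            _ = n * Nat.choose (j + 1 + L) L := by rw [hpascal]; ring
end

section
/- Let f : ℕ → ℕ → ℕ be defined by f(0,h) = 0 for all h, f(n,0) = 1 for all n ≥ 1, and f(n,h) = f(n,h-1) + f(⌊n/2⌋,h) + f(n-1-⌊n/2⌋,h) for all n,h ≥ 1. Then for all natural numbers n ≥ 2 and h ≥ 1, viewing the values as real numbers, f(n,h) ≤ n^(1 + log₂ e) · (1 + (h-1)/(log₂ n))^(log₂ n), where log₂ denotes the real base-2 logarithm, e is Euler's number, and the powers on the right-hand side are real powers. -/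
/-!
By induction on `n` and then on `h`, `f n (j + 1) ≤ n * C(k + j, j)` with `k = ⌊log₂ n⌋`:
the two halves of `n` have total size `n - 1` and `⌊log₂⌋` at most `k - 1`, so the recursion
becomes Pascal's rule. Next `C(k + j, k) ≤ (k + j)^k / k! ≤ e^k (1 + j/k)^k`, and
`x ↦ e^x (1 + j/x)^x` is increasing, so `k` may be replaced by `log₂ n`; finally
`n e^(log₂ n) = n^(1 + log₂ e)`.
-/

open Real

lemma halves_mul_choose_log_le (n j : ℕ) :
    n / 2 * (Nat.log 2 (n / 2) + j).choose j
        + (n - 1 - n / 2) * (Nat.log 2 (n - 1 - n / 2) + j).choose j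
      ≤ (n - 1) * (Nat.log 2 n + j - 1).choose j := by
  rcases Nat.lt_or_ge n 2 with hn | hn
  · rw [show n / 2 = 0 by omega, show n - 1 - 0 = 0 by omega]
    simp
  have hlog_half : Nat.log 2 (n / 2) = Nat.log 2 n - 1 := Nat.log_div_base 2 n
  have hlog_pos : 1 ≤ Nat.log 2 n := Nat.log_pos one_lt_two hn
  have hlog_rest : Nat.log 2 (n - 1 - n / 2) ≤ Nat.log 2 (n / 2) :=
    Nat.log_mono_right (by omega)
  have hchoose : (Nat.log 2 (n - 1 - n / 2) + j).choose j ≤ (Nat.log 2 n + j - 1).choose j :=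
    Nat.choose_le_choose _ (by omega)
  calc _ ≤ n / 2 * (Nat.log 2 n + j - 1).choose j
          + (n - 1 - n / 2) * (Nat.log 2 n + j - 1).choose j := by
        rw [hlog_half, show Nat.log 2 n - 1 + j = Nat.log 2 n + j - 1 by omega]
        gcongr
    _ = (n - 1) * (Nat.log 2 n + j - 1).choose j := by
        rw [← add_mul, show n / 2 + (n - 1 - n / 2) = n - 1 by omega]

theorem le_mul_choose_log {f : ℕ → ℕ → ℕ} (hf0 : ∀ h, f 0 h = 0)
    (hfn0 : ∀ n, 1 ≤ n → f n 0 = 1)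
    (hrec : ∀ n h, 1 ≤ n → 1 ≤ h →
      f n h = f n (h - 1) + f (n / 2) h + f (n - 1 - n / 2) h)
    (n j : ℕ) : f n (j + 1) ≤ n * (Nat.log 2 n + j).choose j := by
  induction n using Nat.strong_induction_on generalizing j with
  | _ n ih =>
  rcases Nat.eq_zero_or_pos n with rfl | hn
  · simp [hf0]
  have halves : ∀ j, f (n / 2) (j + 1) + f (n - 1 - n / 2) (j + 1)
      ≤ (n - 1) * (Nat.log 2 n + j - 1).choose j := fun j =>
    (add_le_add (ih _ (by omega) j) (ih _ (by omega) j)).trans (halves_mul_choose_log_le n j)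
  induction j with
  | zero =>
    have hhalves := halves 0
    rw [hrec n 1 hn le_rfl, Nat.sub_self, hfn0 n hn]
    simp only [zero_add, Nat.choose_zero_right, mul_one] at hhalves ⊢
    omega
  | succ j ihj =>
    have hhalves := halves (j + 1)
    rw [show Nat.log 2 n + (j + 1) - 1 = Nat.log 2 n + j by omega] at hhalves
    rw [hrec n (j + 1 + 1) hn (by omega), Nat.add_sub_cancel, add_assoc]
    calc _ ≤ n * (Nat.log 2 n + j).choose j + (n - 1) * (Nat.log 2 n + j).choose (j + 1) :=
          add_le_add ihj hhalves
      _ ≤ n * (Nat.log 2 n + (j + 1)).choose (j + 1) := by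
          rw [← add_assoc, Nat.choose_succ_succ', mul_add]
          gcongr
          omega

lemma add_mul_log_one_add_div_le {a x y : ℝ} (ha : 0 ≤ a) (hx : 0 < x) (hxy : x ≤ y) :
    x + x * log (1 + a / x) ≤ y + y * log (1 + a / y) := by
  have hy : 0 < y := hx.trans_le hxy
  set t := (1 + a / x) / (1 + a / y) with ht
  have ht_pos : 0 < t := by positivity
  have hsplit : log (1 + a / x) = log t + log (1 + a / y) := by
    rw [← log_mul ht_pos.ne' (by positivity), div_mul_cancel₀ _ (by positivity)]
  have hxt : x * (t - 1) ≤ y - x := by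
    have : x * (t - 1) = a * (y - x) / (y + a) := by
      rw [ht]
      field_simp
      ring
    rw [this, div_le_iff₀ (by positivity)]
    nlinarith
  have hlog_nonneg : 0 ≤ log (1 + a / y) :=
    log_nonneg (le_add_of_nonneg_right (by positivity))
  calc x + x * log (1 + a / x) = x + x * log t + x * log (1 + a / y) := by rw [hsplit]; ring
    _ ≤ x + x * (t - 1) + y * log (1 + a / y) := by
        gcongr
        exact log_le_sub_one_of_pos ht_pos
    _ ≤ y + y * log (1 + a / y) := by linarith

lemma exp_mul_one_add_div_rpow_le {a x y : ℝ} (ha : 0 ≤ a) (hx : 0 < x) (hxy : x ≤ y) :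
    exp x * (1 + a / x) ^ x ≤ exp y * (1 + a / y) ^ y := by
  have hy : 0 < y := hx.trans_le hxy
  rw [rpow_def_of_pos (by positivity), rpow_def_of_pos (by positivity), ← exp_add, ← exp_add,
    exp_le_exp]
  linarith [add_mul_log_one_add_div_le ha hx hxy]

lemma choose_add_le_exp_mul_rpow (k a : ℕ) :
    ((k + a).choose a : ℝ) ≤ exp k * (1 + a / k) ^ (k : ℝ) := by
  rcases Nat.eq_zero_or_pos k with rfl | hk
  · simp
  have hk' : (0 : ℝ) < k := by exact_mod_cast hk
  rw [← Nat.choose_symm_add, rpow_natCast]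
  calc ((k + a).choose k : ℝ) ≤ ((k + a : ℕ) : ℝ) ^ k / k.factorial :=
        Nat.choose_le_pow_div _ _
    _ = (k : ℝ) ^ k / k.factorial * (1 + a / k) ^ k := by
        rw [← mul_div_right_comm, ← mul_pow]
        congr 2
        push_cast
        field_simp
    _ ≤ exp k * (1 + a / k) ^ k := by
        gcongr
        exact pow_div_factorial_le_exp _ hk'.le k

lemma rpow_logb_exp_one {b x : ℝ} (hx : 0 < x) : x ^ logb b (exp 1) = exp (logb b x) := by
  rw [rpow_def_of_pos hx, logb, logb, log_exp]
  ring_nf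

theorem stmt_3 (f : ℕ → ℕ → ℕ)
    (hf0 : ∀ h, f 0 h = 0)
    (hfn0 : ∀ n, 1 ≤ n → f n 0 = 1)
    (hrec : ∀ n h, 1 ≤ n → 1 ≤ h →
      f n h = f n (h - 1) + f (n / 2) h + f (n - 1 - n / 2) h) :
    ∀ n h : ℕ, 2 ≤ n → 1 ≤ h →
      (f n h : ℝ) ≤ (n : ℝ) ^ (1 + Real.logb 2 (Real.exp 1)) *
        (1 + ((h : ℝ) - 1) / Real.logb 2 n) ^ (Real.logb 2 n) := by
  intro n h hn hh
  obtain ⟨j, rfl⟩ : ∃ j, h = j + 1 := ⟨h - 1, by omega⟩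
  have hk : (0 : ℝ) < Nat.log 2 n := by exact_mod_cast Nat.log_pos one_lt_two hn
  have hlog : (Nat.log 2 n : ℝ) ≤ logb 2 n := by exact_mod_cast Real.natLog_le_logb n 2
  have hj : ((j + 1 : ℕ) : ℝ) - 1 = j := by push_cast; ring
  rw [hj, rpow_add (by positivity), rpow_one, rpow_logb_exp_one (by positivity), mul_assoc]
  calc (f n (j + 1) : ℝ) ≤ n * ((Nat.log 2 n + j).choose j : ℝ) := by
        exact_mod_cast le_mul_choose_log hf0 hfn0 hrec n j
    _ ≤ n * (exp (Nat.log 2 n) * (1 + j / Nat.log 2 n) ^ (Nat.log 2 n : ℝ)) := by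
        gcongr
        exact choose_add_le_exp_mul_rpow _ _
    _ ≤ n * (exp (logb 2 n) * (1 + j / logb 2 n) ^ logb 2 n) := by
        gcongr ?_ * ?_
        exact exp_mul_one_add_div_rpow_le (Nat.cast_nonneg j) hk hlog
end

section
/- Let f : ℕ → ℕ → ℕ be defined by f(0,h) = 0 for all h, f(n,0) = 1 for all n ≥ 1, and f(n,h) = f(n,h-1) + f(⌊n/2⌋,h) + f(n-1-⌊n/2⌋,h) for all n,h ≥ 1. Then f is monotone in its first argument: for all natural numbers m ≤ n and all h, f(m,h) ≤ f(n,h). -/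
theorem stmt_12 (f : ℕ → ℕ → ℕ)
    (hf0 : ∀ h, f 0 h = 0)
    (hfn0 : ∀ n, 1 ≤ n → f n 0 = 1)
    (hrec : ∀ n h, 1 ≤ n → 1 ≤ h →
      f n h = f n (h - 1) + f (n / 2) h + f (n - 1 - n / 2) h) :
    ∀ m n h : ℕ, m ≤ n → f m h ≤ f n h := by
  have key : ∀ N n h, n + h ≤ N → f n h ≤ f (n + 1) h := by
    intro N
    induction N with
    | zero =>
      intro n h hle
      have hn : n = 0 := by omega
      subst hn
      rw [hf0]
      exact Nat.zero_le _
    | succ N ih =>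
      intro n h hle
      match n, h with
      | 0, h => rw [hf0]; exact Nat.zero_le _
      | n + 1, 0 =>
        rw [hfn0 _ (by omega), hfn0 _ (by omega)]
      | n + 1, h + 1 =>
        set m := n + 1 with hm
        rw [hrec m (h + 1) (by omega) (by omega),
            hrec (m + 1) (h + 1) (by omega) (by omega)]
        simp only [Nat.add_sub_cancel]
        have t1 : f m h ≤ f (m + 1) h := ih m h (by omega)
        rcases Nat.even_or_odd m with he | ho
        · -- m even : (m+1)/2 = m/2, third terms differ by one
          have hp : m % 2 = 0 := Nat.even_iff.mp he
          have e1 : (m + 1) / 2 = m / 2 := by omega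
          have e2 : m - (m + 1) / 2 = (m - 1 - m / 2) + 1 := by omega
          rw [e1] at e2 ⊢
          rw [e2]
          have t3 : f (m - 1 - m / 2) (h + 1) ≤ f ((m - 1 - m / 2) + 1) (h + 1) := by
            apply ih
            omega
          exact Nat.add_le_add (Nat.add_le_add t1 le_rfl) t3
        · -- m odd : (m+1)/2 = m/2 + 1, third terms equal
          have hp : m % 2 = 1 := Nat.odd_iff.mp ho
          have e1 : (m + 1) / 2 = m / 2 + 1 := by omega
          have e2 : m - (m + 1) / 2 = m - 1 - m / 2 := by omega
          rw [e1] at e2 ⊢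
          rw [e2]
          have t2 : f (m / 2) (h + 1) ≤ f (m / 2 + 1) (h + 1) := by
            apply ih
            omega
          exact Nat.add_le_add (Nat.add_le_add t1 t2) le_rfl
  have step : ∀ n h, f n h ≤ f (n + 1) h := fun n h => key (n + h) n h le_rfl
  intro m n h hmn
  have haux : ∀ k, f m h ≤ f (m + k) h := by
    intro k
    induction k with
    | zero => exact le_rfl
    | succ k ih => exact ih.trans (step (m + k) h)
  have : n = m + (n - m) := by omega
  rw [this]
  exact haux _
end
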